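/- Proposition 5.12: Suppose h is compatibly weighted, i.e. for every integer K ≥ 1 the tail sums satisfy Σ_{k ≥ K} h k ≥ Σ_{k ≥ K} h (−k). Then μ_λ(h) ≤ μ_MB(h) for every real λ > 0. -/

import Mathlib

open scoped Classical

/-- The function `𝕎 : ℝ → ℤ`, equal to `2x` if `x ∈ ℤ` and `2⌊x⌋ + 1` otherwise. -/
noncomputable def Wfun (x : ℝ) : ℤ :=
  if Int.fract x = 0 then 2 * ⌊x⌋ else 2 * ⌊x⌋ + 1

/-- The index `μ_λ(h) = Σ_{k ≠ 0} (1 − 𝕎(λ·k))·(h k)`. -/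
noncomputable def muLam (l : ℝ) (h : ℤ →₀ ℕ) : ℤ :=
  ∑ k ∈ h.support.filter (fun k => k ≠ 0), (1 - Wfun (l * k)) * (h k : ℤ)

/-- The Morse–Bott index `μ_MB(h) = 2·Σ_{k < 0} h k`. -/
def muMB (h : ℤ →₀ ℕ) : ℤ := 2 * ∑ k ∈ h.support.filter (fun k => k < 0), (h k : ℤ)

/-- The finite index set of integers `k ≥ K` relevant to `h` (on which all nonzero terms of
`Σ_{k ≥ K} h k` and `Σ_{k ≥ K} h (−k)` are supported). -/
def tailSet (h : ℤ →₀ ℕ) (K : ℤ) : Finset ℤ :=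
  (h.support ∪ h.support.image (fun k => -k)).filter (fun k => K ≤ k)

lemma fract_zero_eq_floor {x : ℝ} (h : Int.fract x = 0) : x = (⌊x⌋ : ℝ) := by
  have := Int.self_sub_floor x; rw [h] at this; linarith

lemma floor_neg_of_fract_ne (x : ℝ) (hx : Int.fract x ≠ 0) : ⌊-x⌋ = -⌊x⌋ - 1 := by
  have h1 : Int.fract (-x) = 1 - Int.fract x := Int.fract_neg hx
  have h2 := Int.self_sub_floor (-x)
  have h3 := Int.self_sub_floor x
  have : ((⌊-x⌋ : ℝ)) = ((-⌊x⌋ - 1 : ℤ) : ℝ) := by push_cast; linarith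
  exact_mod_cast this

lemma Wfun_neg (x : ℝ) : Wfun (-x) = -Wfun x := by
  unfold Wfun
  by_cases hx : Int.fract x = 0
  · rw [if_pos hx, if_pos (Int.fract_neg_eq_zero.mpr hx)]
    have h : ⌊-x⌋ = -⌊x⌋ := by
      rw [show -x = ((-⌊x⌋ : ℤ) : ℝ) by push_cast [← fract_zero_eq_floor hx]; ring,
        Int.floor_intCast]
    omega
  · rw [if_neg hx, if_neg (fun hc => hx (Int.fract_neg_eq_zero.mp hc)),
      floor_neg_of_fract_ne x hx]
    ring

lemma Wfun_mono {x y : ℝ} (hxy : x ≤ y) : Wfun x ≤ Wfun y := by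
  unfold Wfun
  have hf : ⌊x⌋ ≤ ⌊y⌋ := Int.floor_le_floor hxy
  by_cases hx : Int.fract x = 0 <;> by_cases hy : Int.fract y = 0 <;>
    simp [hx, hy]
  · omega
  · omega
  · have hlt : ⌊x⌋ < ⌊y⌋ := by
      rcases lt_or_eq_of_le hf with h | h
      · exact h
      · exfalso
        have hxe : x = y := le_antisymm hxy (by
          rw [fract_zero_eq_floor hy, ← h]; exact Int.floor_le x)
        rw [hxe] at hx; exact hx hy
    omega
  · omega

lemma Wfun_pos {x : ℝ} (hx : 0 < x) : 1 ≤ Wfun x := by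
  unfold Wfun
  by_cases h : Int.fract x = 0
  · rw [if_pos h]
    have h1 : (0:ℝ) < (⌊x⌋:ℝ) := (fract_zero_eq_floor h) ▸ hx
    have : (1:ℤ) ≤ ⌊x⌋ := by exact_mod_cast h1
    omega
  · rw [if_neg h]
    have := Int.floor_nonneg.mpr hx.le
    omega

lemma icc_insert (K N : ℤ) (h : K ≤ N) :
    Finset.Icc K N = insert K (Finset.Icc (K+1) N) := by
  ext x; simp only [Finset.mem_Icc, Finset.mem_insert]; omega

lemma abel_bound (c d : ℤ → ℤ) (N : ℤ) (hc : ∀ j k : ℤ, j ≤ k → c k ≤ c j)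
    (hT : ∀ K : ℤ, 1 ≤ K → 0 ≤ ∑ k ∈ Finset.Icc K N, d k) :
    ∀ m : ℕ, (m : ℤ) ≤ N →
      ∑ k ∈ Finset.Icc (N + 1 - m) N, c k * d k ≤
        c (N + 1 - m) * ∑ k ∈ Finset.Icc (N + 1 - m) N, d k := by
  intro m
  induction m with
  | zero => simp
  | succ m ih =>
    intro hm
    have hm' : (m : ℤ) ≤ N := by push_cast at hm; omega
    have ih' := ih hm'
    have hK : N + 1 - ((m : ℤ) + 1) = N - m := by ring
    push_cast [hK]
    set K : ℤ := N - m with hKdef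
    have hKN : K ≤ N := by omega
    have hsucc : K + 1 = N + 1 - (m : ℤ) := by omega
    have hnotmem : K ∉ Finset.Icc (K+1) N := by simp
    rw [icc_insert K N hKN, Finset.sum_insert hnotmem, Finset.sum_insert hnotmem]
    have hT1 : 0 ≤ ∑ k ∈ Finset.Icc (K+1) N, d k := hT (K+1) (by omega)
    have h1 : ∑ k ∈ Finset.Icc (K+1) N, c k * d k ≤
        c (K+1) * ∑ k ∈ Finset.Icc (K+1) N, d k := by rw [hsucc]; exact ih'
    have h2 : c (K+1) * ∑ k ∈ Finset.Icc (K+1) N, d k ≤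
        c K * ∑ k ∈ Finset.Icc (K+1) N, d k :=
      mul_le_mul_of_nonneg_right (hc K (K+1) (by omega)) hT1
    nlinarith [h1, h2]

lemma neg_icc_image (N : ℤ) :
    Finset.Icc (-N) (-1) = Finset.image (fun k => -k) (Finset.Icc 1 N) := by
  ext x
  simp only [Finset.mem_Icc, Finset.mem_image]
  constructor
  · intro hx; exact ⟨-x, by omega, by omega⟩
  · rintro ⟨a, ha, rfl⟩; omega

/-- Proposition 5.12: if `h` is compatibly weighted, i.e. `Σ_{k ≥ K} h (−k) ≤ Σ_{k ≥ K} h k`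
for every integer `K ≥ 1`, then `μ_λ(h) ≤ μ_MB(h)` for every real `λ > 0`. -/
theorem muLam_le_muMB_of_compatiblyWeighted (h : ℤ →₀ ℕ)
    (hcw : ∀ K : ℤ, 1 ≤ K →
      ∑ k ∈ tailSet h K, (h (-k) : ℤ) ≤ ∑ k ∈ tailSet h K, (h k : ℤ)) :
    ∀ l : ℝ, 0 < l → muLam l h ≤ muMB h := by
  intro l hl
  set N : ℤ := 1 + ∑ k ∈ h.support, |k| with hNdef
  have habs : ∀ k ∈ h.support, |k| ≤ ∑ j ∈ h.support, |j| := fun k hk =>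
    Finset.single_le_sum (fun j _ => abs_nonneg j) hk
  have hsupp : ∀ k ∈ h.support, -N ≤ k ∧ k ≤ N := by
    intro k hk
    have := habs k hk
    have := abs_nonneg k
    constructor <;> [skip; skip] <;>
      · have h1 := le_abs_self k
        have h2 := neg_abs_le k
        omega
  have hN1 : 1 ≤ N := by
    have : 0 ≤ ∑ j ∈ h.support, |j| := Finset.sum_nonneg fun j _ => abs_nonneg j
    omega
  set c : ℤ → ℤ := fun k => 1 - Wfun (l * k) with hcdef
  set d : ℤ → ℤ := fun k => (h k : ℤ) - (h (-k) : ℤ) with hddef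
  -- c is antitone
  have hcmono : ∀ j k : ℤ, j ≤ k → c k ≤ c j := by
    intro j k hjk
    have : l * j ≤ l * k := by
      apply mul_le_mul_of_nonneg_left _ hl.le
      exact_mod_cast hjk
    have := Wfun_mono this
    simp only [hcdef]
    omega
  -- c (-k) = 2 - c k
  have hcneg : ∀ k : ℤ, c (-k) = 2 - c k := by
    intro k
    simp only [hcdef, Int.cast_neg, mul_neg, Wfun_neg]
    ring
  -- tail sums are nonneg
  have hT : ∀ K : ℤ, 1 ≤ K → 0 ≤ ∑ k ∈ Finset.Icc K N, d k := by
    intro K hK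
    have hsub : tailSet h K ⊆ Finset.Icc K N := by
      intro x hx
      simp only [tailSet, Finset.mem_filter, Finset.mem_union, Finset.mem_image] at hx
      obtain ⟨hmem, hKx⟩ := hx
      simp only [Finset.mem_Icc]
      rcases hmem with hm | ⟨a, ha, rfl⟩
      · exact ⟨hKx, (hsupp x hm).2⟩
      · exact ⟨hKx, by have := (hsupp a ha).1; omega⟩
    have hzero : ∀ x ∈ Finset.Icc K N, x ∉ tailSet h K → d x = 0 := by
      intro x hx hnx
      simp only [tailSet, Finset.mem_filter, Finset.mem_union, Finset.mem_image,
        not_and_or, not_or] at hnx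
      simp only [Finset.mem_Icc] at hx
      rcases hnx with ⟨h1, h2⟩ | hK'
      · have hx0 : h x = 0 := Finsupp.notMem_support_iff.mp h1
        have hnx0 : h (-x) = 0 := by
          by_contra hc'
          exact h2 ⟨-x, Finsupp.mem_support_iff.mpr hc', by ring⟩
        simp [hddef, hx0, hnx0]
      · exact absurd hx.1 hK'
    rw [← Finset.sum_subset hsub hzero]
    have := hcw K hK
    simp only [hddef]
    rw [Finset.sum_sub_distrib]
    omega
  -- the Abel bound
  have habel : ∑ k ∈ Finset.Icc 1 N, c k * d k ≤ 0 := by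
    have := abel_bound c d N hcmono hT N.toNat (by omega)
    rw [show ((N.toNat : ℤ)) = N by omega] at this
    rw [show N + 1 - N = 1 by ring] at this
    have hc1 : c 1 ≤ 0 := by
      simp only [hcdef]
      have : (1:ℤ) ≤ Wfun (l * (1:ℤ)) := Wfun_pos (by push_cast; linarith)
      omega
    have hT1 : 0 ≤ ∑ k ∈ Finset.Icc 1 N, d k := hT 1 le_rfl
    calc ∑ k ∈ Finset.Icc 1 N, c k * d k ≤ c 1 * ∑ k ∈ Finset.Icc 1 N, d k := this
      _ ≤ 0 := mul_nonpos_of_nonpos_of_nonneg hc1 hT1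
  -- rewrite muLam
  have hmuLam : muLam l h = ∑ k ∈ Finset.Icc 1 N, (c k * (h k : ℤ) + c (-k) * (h (-k) : ℤ)) := by
    unfold muLam
    have hsub : h.support.filter (fun k => k ≠ 0) ⊆
        (Finset.Icc (-N) N).filter (fun k => k ≠ 0) := by
      intro x hx
      simp only [Finset.mem_filter] at hx ⊢
      exact ⟨Finset.mem_Icc.mpr (hsupp x hx.1), hx.2⟩
    have hzero : ∀ x ∈ (Finset.Icc (-N) N).filter (fun k => k ≠ 0),
        x ∉ h.support.filter (fun k => k ≠ 0) → (1 - Wfun (l * x)) * (h x : ℤ) = 0 := by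
      intro x hx hnx
      simp only [Finset.mem_filter] at hx hnx
      have : x ∉ h.support := fun hc' => hnx ⟨hc', hx.2⟩
      rw [Finsupp.notMem_support_iff.mp this]
      simp
    rw [Finset.sum_subset hsub hzero]
    have hsplit : (Finset.Icc (-N) N).filter (fun k => k ≠ 0) =
        Finset.Icc 1 N ∪ Finset.Icc (-N) (-1) := by
      ext x
      simp only [Finset.mem_filter, Finset.mem_Icc, Finset.mem_union]
      omega
    have hdisj : Disjoint (Finset.Icc 1 N) (Finset.Icc (-N) (-1)) := by
      rw [Finset.disjoint_left]
      intro x hx hx'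
      simp only [Finset.mem_Icc] at hx hx'
      omega
    rw [hsplit, Finset.sum_union hdisj, neg_icc_image,
      Finset.sum_image (by intro a _ b _ hab; exact neg_inj.mp hab), ← Finset.sum_add_distrib]
  -- rewrite muMB
  have hmuMB : muMB h = 2 * ∑ k ∈ Finset.Icc 1 N, (h (-k) : ℤ) := by
    unfold muMB
    congr 1
    have hsub : h.support.filter (fun k => k < 0) ⊆ Finset.Icc (-N) (-1) := by
      intro x hx
      simp only [Finset.mem_filter] at hx
      have := hsupp x hx.1
      simp only [Finset.mem_Icc]
      omega
    have hzero : ∀ x ∈ Finset.Icc (-N) (-1),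
        x ∉ h.support.filter (fun k => k < 0) → (h x : ℤ) = 0 := by
      intro x hx hnx
      simp only [Finset.mem_filter, Finset.mem_Icc] at hx hnx
      have : x ∉ h.support := fun hc' => hnx ⟨hc', by omega⟩
      simp [Finsupp.notMem_support_iff.mp this]
    rw [Finset.sum_subset hsub hzero, neg_icc_image,
      Finset.sum_image (by intro a _ b _ hab; exact neg_inj.mp hab)]
  rw [hmuLam, hmuMB]
  have : ∑ k ∈ Finset.Icc 1 N, (c k * (h k : ℤ) + c (-k) * (h (-k) : ℤ)) =
      (∑ k ∈ Finset.Icc 1 N, c k * d k) + 2 * ∑ k ∈ Finset.Icc 1 N, (h (-k) : ℤ) := by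
    rw [Finset.mul_sum, ← Finset.sum_add_distrib]
    apply Finset.sum_congr rfl
    intro x _
    rw [hcneg x]
    simp only [hddef]
    ring
  rw [this]
  omega
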